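/- Let K be a field, G a finite simple connected graph, S = {B_{w_1}, …, B_{w_r}} a minimal generating set of binomials of I_G, and v a vertex of G. Then I_G = I_{G_S^v} + I_{G−v}, where G_S^v is the subgraph of G whose edge set is the union of the edge sets E(w_i) over those i with v ∈ V(w_i), and G−v is the subgraph of G obtained by deleting the vertex v and all edges incident to it. -/
import Mathlib


open MvPolynomial

/-- The monomial `y_u * y_w` associated to the edge `e = {u, w}`. -/
noncomputable def edgeMon (K : Type) [Field K] {V : Type} (e : Sym2 V) :
    MvPolynomial V K :=
  Sym2.lift ⟨fun u w => X u * X w, fun u w => mul_comm _ _⟩ e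

/-- The toric ideal `I_G` of a graph `G`, i.e. the kernel of the `K`-algebra map
`K[x_e : e ∈ E(G)] → K[y_v : v ∈ V]`, sending `x_e ↦ y_u y_w` for `e = {u, w}`. -/
noncomputable def toricIdeal (K : Type) [Field K] {V : Type} (G : SimpleGraph V) :
    Ideal (MvPolynomial G.edgeSet K) :=
  RingHom.ker (MvPolynomial.aeval (fun e : G.edgeSet => edgeMon K (e : Sym2 V)) :
    MvPolynomial G.edgeSet K →ₐ[K] MvPolynomial V K)

/-- For a subgraph `H ≤ G`, the ideal of `K[x_e : e ∈ E(G)]` obtained by extending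
the toric ideal `I_H` along the inclusion of variables `x_e` (`e ∈ E(H)`). -/
noncomputable def extIdeal (K : Type) [Field K] {V : Type} (G H : SimpleGraph V)
    (h : H ≤ G) : Ideal (MvPolynomial G.edgeSet K) :=
  (toricIdeal K H).map
    (MvPolynomial.rename (Set.inclusion (SimpleGraph.edgeSet_mono h)) :
      MvPolynomial H.edgeSet K →ₐ[K] MvPolynomial G.edgeSet K)

/-- A subgraph splitting `I_G = I_{G₁} + I_{G₂}`, with `I_{G₁} ≠ I_G ≠ I_{G₂}`. -/
def IsSubgraphSplitting (K : Type) [Field K] {V : Type} (G G₁ G₂ : SimpleGraph V)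
    (h₁ : G₁ ≤ G) (h₂ : G₂ ≤ G) : Prop :=
  toricIdeal K G = extIdeal K G G₁ h₁ + extIdeal K G G₂ h₂ ∧
    extIdeal K G G₁ h₁ ≠ toricIdeal K G ∧ extIdeal K G G₂ h₂ ≠ toricIdeal K G

/-- `I_G` is subgraph splittable. -/
def SubgraphSplittable (K : Type) [Field K] {V : Type} (G : SimpleGraph V) : Prop :=
  ∃ (G₁ G₂ : SimpleGraph V) (h₁ : G₁ ≤ G) (h₂ : G₂ ≤ G),
    IsSubgraphSplitting K G G₁ G₂ h₁ h₂

/-- Alternating products: for a list `[e₁, …, e₂q]` the first component is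
`x_{e₁} x_{e₃} ⋯` (odd positions) and the second is `x_{e₂} x_{e₄} ⋯` (even positions). -/
noncomputable def altProd (K : Type) [Field K] {α : Type} :
    List α → MvPolynomial α K × MvPolynomial α K
  | [] => (1, 1)
  | a :: l => (X a * (altProd K l).2, (altProd K l).1)

/-- The edges of a walk in `G`, as a list of elements of `E(G)`. -/
def walkEdgeList {V : Type} {G : SimpleGraph V} {u v : V} (w : G.Walk u v) :
    List G.edgeSet :=
  w.edges.attachWith (· ∈ G.edgeSet) (fun _ he => w.edges_subset_edgeSet he)

/-- The binomial `B_w` of an even closed walk `w = (e_{i₁}, …, e_{i₂q})`: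
`∏ x_{e_{i_{2k-1}}} - ∏ x_{e_{i_{2k}}}`. -/
noncomputable def walkBinomial (K : Type) [Field K] {V : Type} {G : SimpleGraph V}
    {v : V} (w : G.Walk v v) : MvPolynomial G.edgeSet K :=
  (altProd K (walkEdgeList w)).1 - (altProd K (walkEdgeList w)).2

/-- `f` is a binomial of `I_G`, i.e. `f = B_w` for an even closed walk `w` of `G`. -/
def IsBinomial (K : Type) [Field K] {V : Type} (G : SimpleGraph V)
    (f : MvPolynomial G.edgeSet K) : Prop :=
  ∃ (v : V) (w : G.Walk v v), Even w.length ∧ f = walkBinomial K w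

/-- `S` is a minimal generating set of binomials of the ideal `I`: all its members
are binomials `B_w`, it generates `I`, and no proper subset generates `I`. -/
def IsMinBinomialGens (K : Type) [Field K] {V : Type} (G : SimpleGraph V)
    (S : Set (MvPolynomial G.edgeSet K)) (I : Ideal (MvPolynomial G.edgeSet K)) : Prop :=
  (∀ f ∈ S, IsBinomial K G f) ∧ Ideal.span S = I ∧
    ∀ T : Set (MvPolynomial G.edgeSet K), T ⊂ S → Ideal.span T ≠ I

/-- A family of even closed walks `w₁, …, w_r` of `G` (the data underlying a set of
binomials `S = {B_{w₁}, …, B_{w_r}}`). -/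
structure BinomialWalkGens (K : Type) [Field K] {V : Type} (G : SimpleGraph V) where
  r : ℕ
  base : Fin r → V
  walk : (i : Fin r) → G.Walk (base i) (base i)
  even : ∀ i, Even (walk i).length

namespace BinomialWalkGens

variable {K : Type} [Field K] {V : Type} {G : SimpleGraph V}

/-- The set of binomials `{B_{w₁}, …, B_{w_r}}`. -/
def binomials (S : BinomialWalkGens K G) : Set (MvPolynomial G.edgeSet K) :=
  Set.range fun i => walkBinomial K (S.walk i)

/-- `S = {B_{w₁}, …, B_{w_r}}` is a minimal generating set of binomials of `I`. -/
def IsMinGens (S : BinomialWalkGens K G) (I : Ideal (MvPolynomial G.edgeSet K)) : Prop :=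
  IsMinBinomialGens K G S.binomials I

/-- The subgraph `G_S^e` of `G`: the union of the walks `w_i` with `e ∈ E(w_i)`. -/
def GSe (S : BinomialWalkGens K G) (e : Sym2 V) : SimpleGraph V :=
  SimpleGraph.fromEdgeSet (⋃ i ∈ {i : Fin S.r | e ∈ (S.walk i).edges}, {f | f ∈ (S.walk i).edges})

lemma GSe_le (S : BinomialWalkGens K G) (e : Sym2 V) : S.GSe e ≤ G := by
  intro u w h
  rw [GSe, SimpleGraph.fromEdgeSet_adj] at h
  obtain ⟨hm, hne⟩ := h
  simp only [Set.mem_iUnion, Set.mem_setOf_eq] at hm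
  obtain ⟨i, -, hi⟩ := hm
  exact G.mem_edgeSet.mp ((S.walk i).edges_subset_edgeSet hi)

/-- The subgraph `G_S^F = ⋃_{e ∈ F} G_S^e` of `G`. -/
def GSF (S : BinomialWalkGens K G) (F : Set (Sym2 V)) : SimpleGraph V :=
  ⨆ e ∈ F, S.GSe e

lemma GSF_le (S : BinomialWalkGens K G) (F : Set (Sym2 V)) : S.GSF F ≤ G :=
  iSup₂_le fun e _ => S.GSe_le e

/-- The subgraph `G_S^v` of `G`: the union of the edge sets of the walks `w_i`
with `v ∈ V(w_i)`. -/
def GSv (S : BinomialWalkGens K G) (v : V) : SimpleGraph V :=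
  SimpleGraph.fromEdgeSet (⋃ i ∈ {i : Fin S.r | v ∈ (S.walk i).support}, {f | f ∈ (S.walk i).edges})

lemma GSv_le (S : BinomialWalkGens K G) (v : V) : S.GSv v ≤ G := by
  intro u w h
  rw [GSv, SimpleGraph.fromEdgeSet_adj] at h
  obtain ⟨hm, hne⟩ := h
  simp only [Set.mem_iUnion, Set.mem_setOf_eq] at hm
  obtain ⟨i, -, hi⟩ := hm
  exact G.mem_edgeSet.mp ((S.walk i).edges_subset_edgeSet hi)

end BinomialWalkGens

/-- `I_G` is edge splittable: there are an edge `e` of `G` and a minimal generating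
set of binomials `S` of `I_G` such that `I_G = I_{G_S^e} + I_{G∖e}` is a subgraph
splitting of `I_G`. -/
def EdgeSplittable (K : Type) [Field K] {V : Type} (G : SimpleGraph V) : Prop :=
  ∃ (e : Sym2 V) (_ : e ∈ G.edgeSet) (S : BinomialWalkGens K G),
    S.IsMinGens (toricIdeal K G) ∧
    IsSubgraphSplitting K G (S.GSe e) (G.deleteEdges {e}) (S.GSe_le e)
      (SimpleGraph.deleteEdges_le _)

/-- A minimal splitting: a subgraph splitting `I_G = I_{G₁} + I_{G₂}` admitting
minimal generating sets of binomials `S` of `I_{G₁}` and `T` of `I_{G₂}` such that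
`S ∪ T` is a minimal generating set of `I_G`. -/
def IsMinimalSplitting (K : Type) [Field K] {V : Type} (G G₁ G₂ : SimpleGraph V)
    (h₁ : G₁ ≤ G) (h₂ : G₂ ≤ G) : Prop :=
  IsSubgraphSplitting K G G₁ G₂ h₁ h₂ ∧
    ∃ S T : Set (MvPolynomial G.edgeSet K),
      IsMinBinomialGens K G S (extIdeal K G G₁ h₁) ∧
      IsMinBinomialGens K G T (extIdeal K G G₂ h₂) ∧
      IsMinBinomialGens K G (S ∪ T) (toricIdeal K G)

/-- A reduced splitting: a subgraph splitting `I_G = I_{G₁} + I_{G₂}` such that for all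
subgraphs `H₁ ⊆ G₁`, `H₂ ⊆ G₂` with `I_G = I_{H₁} + I_{H₂}` one has `I_{H₁} = I_{G₁}`
and `I_{H₂} = I_{G₂}`. -/
def IsReducedSplitting (K : Type) [Field K] {V : Type} (G G₁ G₂ : SimpleGraph V)
    (h₁ : G₁ ≤ G) (h₂ : G₂ ≤ G) : Prop :=
  IsSubgraphSplitting K G G₁ G₂ h₁ h₂ ∧
    ∀ (H₁ H₂ : SimpleGraph V) (hH₁ : H₁ ≤ G₁) (hH₂ : H₂ ≤ G₂),
      toricIdeal K G = extIdeal K G H₁ (hH₁.trans h₁) + extIdeal K G H₂ (hH₂.trans h₂) →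
      extIdeal K G H₁ (hH₁.trans h₁) = extIdeal K G G₁ h₁ ∧
        extIdeal K G H₂ (hH₂.trans h₂) = extIdeal K G G₂ h₂

/-- The wheel graph `W_{n+1}`: vertices `0, …, n-1` (the cycle `C_n`, with edges between
`i` and `(i+1) % n`) together with the universal vertex `n` joined to all cycle vertices. -/
def wheelGraph (n : ℕ) : SimpleGraph (Fin (n + 1)) :=
  SimpleGraph.fromRel fun u v =>
    (u.val < n ∧ v.val < n ∧ v.val = (u.val + 1) % n) ∨ (u.val = n ∧ v.val < n)

section Aux

variable (K : Type) [Field K] {V : Type}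

lemma aeval_rename_inclusion {G H : SimpleGraph V} (h : H ≤ G)
    (p : MvPolynomial H.edgeSet K) :
    MvPolynomial.aeval (fun e : G.edgeSet => edgeMon K (e : Sym2 V))
      (MvPolynomial.rename (Set.inclusion (SimpleGraph.edgeSet_mono h)) p) =
    MvPolynomial.aeval (fun e : H.edgeSet => edgeMon K (e : Sym2 V)) p := by
  rw [MvPolynomial.aeval_rename]
  rfl

lemma extIdeal_le_toricIdeal (G H : SimpleGraph V) (h : H ≤ G) :
    extIdeal K G H h ≤ toricIdeal K G := by
  rw [extIdeal, Ideal.map_le_iff_le_comap]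
  intro p hp
  simp only [Ideal.mem_comap, toricIdeal, RingHom.mem_ker, AlgHom.toRingHom_eq_coe,
    RingHom.coe_coe] at hp ⊢
  rw [aeval_rename_inclusion K h p]
  exact hp

lemma altProd_map {α β : Type} (f : α → β) (l : List α) :
    (altProd K (l.map f)).1 = MvPolynomial.rename f (altProd K l).1 ∧
    (altProd K (l.map f)).2 = MvPolynomial.rename f (altProd K l).2 := by
  induction l with
  | nil => simp [altProd]
  | cons a l ih =>
    simp [altProd, ih.1, ih.2, map_mul]

lemma walkEdgeList_transfer {G H : SimpleGraph V} (h : H ≤ G) {u : V} (w : G.Walk u u)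
    (hw : ∀ e ∈ w.edges, e ∈ H.edgeSet) :
    (walkEdgeList (w.transfer H hw)).map
        (Set.inclusion (SimpleGraph.edgeSet_mono h)) = walkEdgeList w := by
  apply List.map_injective_iff.2 (Subtype.val_injective (p := (· ∈ G.edgeSet)))
  rw [List.map_map]
  have h1 : (walkEdgeList (w.transfer H hw)).map Subtype.val = w.edges := by
    simp [walkEdgeList, SimpleGraph.Walk.edges_transfer]
  have h2 : (walkEdgeList w).map Subtype.val = w.edges := by
    simp [walkEdgeList]
  have h3 : (walkEdgeList (w.transfer H hw)).map
      (Subtype.val ∘ Set.inclusion (SimpleGraph.edgeSet_mono h)) =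
      (walkEdgeList (w.transfer H hw)).map Subtype.val := by
    apply List.map_congr_left
    intro a _
    rfl
  rw [h3, h1, h2]

lemma rename_walkBinomial_transfer {G H : SimpleGraph V} (h : H ≤ G) {u : V}
    (w : G.Walk u u) (hw : ∀ e ∈ w.edges, e ∈ H.edgeSet) :
    MvPolynomial.rename (Set.inclusion (SimpleGraph.edgeSet_mono h))
      (walkBinomial K (w.transfer H hw)) = walkBinomial K w := by
  rw [walkBinomial, walkBinomial, map_sub,
    ← (altProd_map K _ (walkEdgeList (w.transfer H hw))).1,
    ← (altProd_map K _ (walkEdgeList (w.transfer H hw))).2,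
    walkEdgeList_transfer h w hw]

lemma walkBinomial_mem_extIdeal {G H : SimpleGraph V} (h : H ≤ G) {u : V}
    (w : G.Walk u u) (hw : ∀ e ∈ w.edges, e ∈ H.edgeSet)
    (hmem : walkBinomial K w ∈ toricIdeal K G) :
    walkBinomial K w ∈ extIdeal K G H h := by
  rw [← rename_walkBinomial_transfer K h w hw]
  refine Ideal.mem_map_of_mem _ ?_
  have hmem' : MvPolynomial.aeval (fun e : G.edgeSet => edgeMon K (e : Sym2 V))
      (walkBinomial K w) = 0 := hmem
  rw [toricIdeal, RingHom.mem_ker]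
  show MvPolynomial.aeval (fun e : H.edgeSet => edgeMon K (e : Sym2 V))
      (walkBinomial K (w.transfer H hw)) = 0
  rw [← aeval_rename_inclusion K h, rename_walkBinomial_transfer K h w hw]
  exact hmem'

end Aux

/-- Let `S = {B_{w₁}, …, B_{w_r}}` be a minimal generating set of
binomials of `I_G` and `v` a vertex of `G`.  Then `I_G = I_{G_S^v} + I_{G−v}`, where
`G_S^v` has as edges the union of the `E(w_i)` over those `i` with `v ∈ V(w_i)`, and
`G−v` is obtained from `G` by deleting the vertex `v` (i.e. all edges incident to it). -/
theorem toricIdeal_eq_extIdeal_GSv_add_extIdeal_deleteVertex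
    (K : Type) [Field K] {V : Type} [Fintype V] [DecidableEq V]
    (G : SimpleGraph V) (hG : G.Connected)
    (S : BinomialWalkGens K G) (hS : S.IsMinGens (toricIdeal K G)) (v : V) :
    toricIdeal K G =
      extIdeal K G (S.GSv v) (S.GSv_le v) +
        extIdeal K G (G.deleteEdges (G.incidenceSet v)) (SimpleGraph.deleteEdges_le _) := by
  obtain ⟨-, hspan, -⟩ := hS
  apply le_antisymm
  · rw [← hspan, Ideal.span_le]
    rintro f ⟨i, rfl⟩
    have hmem : walkBinomial K (S.walk i) ∈ toricIdeal K G := by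
      rw [← hspan]
      exact Ideal.subset_span ⟨i, rfl⟩
    by_cases hv : v ∈ (S.walk i).support
    · apply Ideal.mem_sup_left
      apply walkBinomial_mem_extIdeal K (S.GSv_le v) (S.walk i) ?_ hmem
      intro e he
      rw [BinomialWalkGens.GSv, SimpleGraph.edgeSet_fromEdgeSet]
      refine ⟨?_, SimpleGraph.not_isDiag_of_mem_edgeSet G
        ((S.walk i).edges_subset_edgeSet he)⟩
      exact Set.mem_biUnion hv he
    · apply Ideal.mem_sup_right
      apply walkBinomial_mem_extIdeal K (SimpleGraph.deleteEdges_le _) (S.walk i) ?_ hmem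
      intro e he
      rw [SimpleGraph.edgeSet_deleteEdges]
      refine ⟨(S.walk i).edges_subset_edgeSet he, ?_⟩
      intro hinc
      apply hv
      induction e with
      | h x y =>
        rcases (G.mk'_mem_incidenceSet_iff).1 hinc with ⟨-, hxy⟩
        rcases hxy with rfl | rfl
        · exact (S.walk i).fst_mem_support_of_mem_edges he
        · exact (S.walk i).snd_mem_support_of_mem_edges he
  · rw [Ideal.add_eq_sup, sup_le_iff]
    exact ⟨extIdeal_le_toricIdeal K G _ _, extIdeal_le_toricIdeal K G _ _⟩
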